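/- Let C : ℝ → (nonempty closed subsets of ℝⁿ) be Lipschitz continuous with constant L_C with respect to the Hausdorff distance, let each C(t) be η-prox-regular, let f : ℝ × ℝⁿ → ℝⁿ satisfy ‖f(t₁,x₁) − f(t₂,x₂)‖ ≤ L_f|t₁ − t₂| + L_f‖x₁ − x₂‖, let ‖f(t,x)‖ ≤ M_f on ℝ × ⋃_{t∈ℝ} C(t), let f be strongly monotone with constant α > (L_C + M_f)/η, suppose both t ↦ C(t) and t ↦ f(t,x) are T-periodic (T > 0), and suppose for each a ∈ C(0) there is a unique solution x_a on [0,T] of −ẋ ∈ N(C(t),x) + f(t,x) with x_a(0) = a, depending continuously on a. Then the Poincaré map a ↦ x_a(T) maps C(0) into C(0), is a contraction with Lipschitz constant e^{ᾱT} < 1 where ᾱ = (M_f + L_C − ηα)/η, and consequently there exists a ∈ C(0) with x_a(T) = a, i.e. the sweeping process has a T-periodic solution. -/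

import Mathlib

noncomputable section
open MeasureTheory Metric Set Filter
open scoped RealInnerProductSpace

/-- The proximal normal cone to a set `C` at a point `x`: vectors `v` such that `x` is a
nearest point of `C` to `x + a • v` for some `a > 0`. -/
def proxNormalCone {n : ℕ} (C : Set (EuclideanSpace ℝ (Fin n)))
    (x : EuclideanSpace ℝ (Fin n)) : Set (EuclideanSpace ℝ (Fin n)) :=
  {v | ∃ a : ℝ, 0 < a ∧ ∀ c ∈ C, dist (x + a • v) x ≤ dist (x + a • v) c}

/-- A closed set `C` is `η`-prox-regular if every proximal normal `v` with `‖v‖ ≤ η` at `x ∈ C`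
satisfies `⟪v, y - x⟫ ≤ (‖v‖/(2η)) ‖y - x‖²` for all `y ∈ C`. -/
def IsProxRegular {n : ℕ} (η : ℝ) (C : Set (EuclideanSpace ℝ (Fin n))) : Prop :=
  ∀ x ∈ C, ∀ v ∈ proxNormalCone C x, ‖v‖ ≤ η →
    ∀ y ∈ C, ⟪v, y - x⟫ ≤ (‖v‖ / (2 * η)) * ‖y - x‖ ^ 2

/-- `x` is an (absolutely continuous) solution of the perturbed sweeping process
`-ẋ ∈ N(C(t),x) + f(t,x)` on the set `I`, with a.e. derivative `xd`: `x` takes values in the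
moving set, is the integral of the locally integrable function `xd`, and the differential
inclusion holds almost everywhere on `I`. -/
def IsSweepingSolutionOn {n : ℕ} (C : ℝ → Set (EuclideanSpace ℝ (Fin n)))
    (f : ℝ → EuclideanSpace ℝ (Fin n) → EuclideanSpace ℝ (Fin n))
    (x xd : ℝ → EuclideanSpace ℝ (Fin n)) (I : Set ℝ) : Prop :=
  (∀ t ∈ I, x t ∈ C t) ∧
  LocallyIntegrableOn xd I ∧
  (∀ s ∈ I, ∀ t ∈ I, x t - x s = ∫ u in s..t, xd u) ∧
  (∀ᵐ t ∂(volume : Measure ℝ), t ∈ I → -xd t - f t (x t) ∈ proxNormalCone (C t) (x t))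

/-!
A solution can only leave the moving set as fast as the set moves: comparing `x s` with a nearest
point of `C τ` and using prox-regularity at `x τ` gives `‖ẋ + f(t, x)‖ ≤ L_C + M_f` almost
everywhere, for every normal direction (the restriction `‖v‖ ≤ η` disappears after rescaling).
With this bound, the prox-regularity inequalities at two solutions `x_a`, `x_c` add up to a
hypomonotonicity estimate which, together with the strong monotonicity of `f`, gives
`d/dt ‖x_a - x_c‖² ≤ 2ᾱ ‖x_a - x_c‖²`; Grönwall turns this into the contraction constant `e^{ᾱT}`.
By periodicity `C T = C 0`, so the Poincaré map is a contraction of the complete set `C 0` and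
Banach's theorem gives the fixed point.
-/

open scoped Topology NNReal

section ProxRegular

variable {n : ℕ} {η : ℝ} {K : Set (EuclideanSpace ℝ (Fin n))}

theorem smul_mem_proxNormalCone {x v : EuclideanSpace ℝ (Fin n)} {c : ℝ} (hc : 0 < c)
    (hv : v ∈ proxNormalCone K x) : c • v ∈ proxNormalCone K x := by
  obtain ⟨a, ha, h⟩ := hv
  exact ⟨a / c, div_pos ha hc, by rwa [smul_smul, div_mul_cancel₀ _ hc.ne']⟩

/-- Rescaling `v` to norm `η` removes the restriction `‖v‖ ≤ η` in the definition. -/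
theorem IsProxRegular.inner_le (hη : 0 < η) (hK : IsProxRegular η K)
    {x v y : EuclideanSpace ℝ (Fin n)} (hx : x ∈ K) (hv : v ∈ proxNormalCone K x) (hy : y ∈ K) :
    ⟪v, y - x⟫ ≤ ‖v‖ / (2 * η) * ‖y - x‖ ^ 2 := by
  rcases eq_or_ne v 0 with rfl | hv0
  · simp
  have hvpos : 0 < ‖v‖ := norm_pos_iff.2 hv0
  have hc : 0 < η / ‖v‖ := div_pos hη hvpos
  have hnorm : ‖(η / ‖v‖) • v‖ = η := by
    rw [norm_smul, Real.norm_of_nonneg hc.le, div_mul_cancel₀ _ hvpos.ne']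
  have h := hK x hx _ (smul_mem_proxNormalCone hc hv) hnorm.le y hy
  rw [real_inner_smul_left, hnorm] at h
  calc ⟪v, y - x⟫ = ‖v‖ / η * (η / ‖v‖ * ⟪v, y - x⟫) := by field_simp
    _ ≤ ‖v‖ / η * (η / (2 * η) * ‖y - x‖ ^ 2) := by gcongr
    _ = ‖v‖ / (2 * η) * ‖y - x‖ ^ 2 := by field_simp

theorem IsProxRegular.inner_sub_le (hη : 0 < η) (hK : IsProxRegular η K)
    {x₁ x₂ x₁' x₂' g₁ g₂ : EuclideanSpace ℝ (Fin n)} {α R : ℝ} (hx₁ : x₁ ∈ K) (hx₂ : x₂ ∈ K)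
    (hv₁ : -x₁' - g₁ ∈ proxNormalCone K x₁) (hv₂ : -x₂' - g₂ ∈ proxNormalCone K x₂)
    (hR₁ : ‖x₁' + g₁‖ ≤ R) (hR₂ : ‖x₂' + g₂‖ ≤ R)
    (hmono : α * ‖x₁ - x₂‖ ^ 2 ≤ ⟪g₁ - g₂, x₁ - x₂⟫) :
    ⟪x₁' - x₂', x₁ - x₂⟫ ≤ (R / η - α) * ‖x₁ - x₂‖ ^ 2 := by
  have h₁ := hK.inner_le hη hx₁ hv₁ hx₂
  have h₂ := hK.inner_le hη hx₂ hv₂ hx₁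
  have hn : ∀ a b : EuclideanSpace ℝ (Fin n), ‖-a - b‖ = ‖a + b‖ := fun a b => by
    rw [← norm_neg]; congr 1; abel
  rw [norm_sub_rev x₂ x₁, hn] at h₁
  rw [hn] at h₂
  have hsplit : ⟪x₁' - x₂', x₁ - x₂⟫ =
      ⟪-x₁' - g₁, x₂ - x₁⟫ + ⟪-x₂' - g₂, x₁ - x₂⟫ - ⟪g₁ - g₂, x₁ - x₂⟫ := by
    rw [← neg_sub x₁ x₂, inner_neg_right]
    simp only [inner_sub_left, inner_neg_left]
    ring
  calc ⟪x₁' - x₂', x₁ - x₂⟫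
      ≤ ‖x₁' + g₁‖ / (2 * η) * ‖x₁ - x₂‖ ^ 2 + ‖x₂' + g₂‖ / (2 * η) * ‖x₁ - x₂‖ ^ 2
          - α * ‖x₁ - x₂‖ ^ 2 := by linarith
    _ ≤ R / (2 * η) * ‖x₁ - x₂‖ ^ 2 + R / (2 * η) * ‖x₁ - x₂‖ ^ 2 - α * ‖x₁ - x₂‖ ^ 2 := by
        gcongr
    _ = (R / η - α) * ‖x₁ - x₂‖ ^ 2 := by field_simp; ring

theorem IsProxRegular.neg_inner_le_of_hasDerivWithinAt (hη : 0 < η) (hK : IsProxRegular η K)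
    {x : ℝ → EuclideanSpace ℝ (Fin n)} {x' v : EuclideanSpace ℝ (Fin n)} {τ L : ℝ}
    (hxτ : x τ ∈ K) (hv : v ∈ proxNormalCone K (x τ)) (hx : HasDerivWithinAt x x' (Iio τ) τ)
    (happroach : ∀ᶠ s in 𝓝[<] τ, ∃ y ∈ K, ‖x s - y‖ ≤ L * (τ - s)) :
    -⟪v, x'⟫ ≤ L * ‖v‖ := by
  set q : ℝ → EuclideanSpace ℝ (Fin n) := fun s => (τ - s)⁻¹ • (x s - x τ)
  have hq : Tendsto q (𝓝[<] τ) (𝓝 (-x')) := by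
    have := ((hasDerivWithinAt_iff_tendsto_slope' (self_notMem_Iio (a := τ))).1 hx).neg
    refine this.congr' (Eventually.of_forall fun s => ?_)
    simp only [q, slope_def_module, ← neg_smul, ← inv_neg, neg_sub]
  have hgap : Tendsto (fun s => τ - s) (𝓝[<] τ) (𝓝 0) := by
    have : Tendsto (fun s => τ - s) (𝓝 τ) (𝓝 (τ - τ)) := tendsto_const_nhds.sub tendsto_id
    simpa using this.mono_left nhdsWithin_le_nhds
  -- the quadratic term of prox-regularity is `O((τ - s)²)` and disappears in the limit
  have hbound : Tendsto (fun s => ‖v‖ / (2 * η) * (τ - s) * (L + ‖q s‖) ^ 2 + L * ‖v‖)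
      (𝓝[<] τ) (𝓝 (‖v‖ / (2 * η) * 0 * (L + ‖-x'‖) ^ 2 + L * ‖v‖)) :=
    ((tendsto_const_nhds.mul hgap).mul ((tendsto_const_nhds.add hq.norm).pow 2)).add
      tendsto_const_nhds
  rw [mul_zero, zero_mul, zero_add] at hbound
  have hlim : Tendsto (fun s => ⟪v, q s⟫) (𝓝[<] τ) (𝓝 (-⟪v, x'⟫)) := by
    simpa only [inner_neg_right] using tendsto_const_nhds.inner (𝕜 := ℝ) hq
  refine le_of_tendsto_of_tendsto hlim hbound ?_
  filter_upwards [happroach, self_mem_nhdsWithin] with s ⟨y, hyK, hy⟩ (hs : s < τ)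
  have hd : 0 < τ - s := sub_pos.2 hs
  have hxs : x s - x τ = (τ - s) • q s := by
    simp only [q, smul_smul, mul_inv_cancel₀ hd.ne', one_smul]
  have hyx : ‖y - x τ‖ ≤ (τ - s) * (L + ‖q s‖) := by
    calc ‖y - x τ‖ ≤ ‖y - x s‖ + ‖x s - x τ‖ := norm_sub_le_norm_sub_add_norm_sub y (x s) (x τ)
      _ ≤ L * (τ - s) + (τ - s) * ‖q s‖ := by
          rw [norm_sub_rev, hxs, norm_smul, Real.norm_of_nonneg hd.le]; linarith
      _ = (τ - s) * (L + ‖q s‖) := by ring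
  have hprox := hK.inner_le hη hxτ hv hyK
  have hclose : ⟪v, x s - y⟫ ≤ ‖v‖ * (L * (τ - s)) :=
    (real_inner_le_norm _ _).trans (mul_le_mul_of_nonneg_left hy (norm_nonneg _))
  have hsplit : (τ - s) * ⟪v, q s⟫ = ⟪v, y - x τ⟫ + ⟪v, x s - y⟫ := by
    rw [← real_inner_smul_right, ← hxs, ← inner_add_right, sub_add_sub_cancel']
  refine le_of_mul_le_mul_left ?_ hd
  calc (τ - s) * ⟪v, q s⟫ ≤ ‖v‖ / (2 * η) * ((τ - s) * (L + ‖q s‖)) ^ 2 + ‖v‖ * (L * (τ - s)) := by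
        rw [hsplit]; gcongr; exact hprox.trans (by gcongr)
    _ = (τ - s) * (‖v‖ / (2 * η) * (τ - s) * (L + ‖q s‖) ^ 2 + L * ‖v‖) := by ring

end ProxRegular

theorem norm_add_le_of_inner_add_le {F : Type*} [NormedAddCommGroup F] [InnerProductSpace ℝ F]
    {a b : F} {L M : ℝ} (hL : 0 ≤ L) (h : ⟪a + b, a⟫ ≤ L * ‖a + b‖) (hb : ‖b‖ ≤ M) :
    ‖a + b‖ ≤ L + M := by
  have hsq : ‖a + b‖ ^ 2 ≤ (L + M) * ‖a + b‖ := by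
    calc ‖a + b‖ ^ 2 = ⟪a + b, a⟫ + ⟪a + b, b⟫ := by
          rw [← real_inner_self_eq_norm_sq, inner_add_right]
      _ ≤ L * ‖a + b‖ + ‖a + b‖ * ‖b‖ := add_le_add h (real_inner_le_norm _ _)
      _ ≤ (L + M) * ‖a + b‖ := by nlinarith [norm_nonneg (a + b)]
  nlinarith [norm_nonneg (a + b), norm_nonneg b]

theorem norm_sub_le_of_mul_norm_sq_le_inner {F : Type*} [NormedAddCommGroup F]
    [InnerProductSpace ℝ F] {x y g₁ g₂ : F} {α M : ℝ} (hα : 0 < α)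
    (hmono : α * ‖x - y‖ ^ 2 ≤ ⟪g₁ - g₂, x - y⟫) (h₁ : ‖g₁‖ ≤ M) (h₂ : ‖g₂‖ ≤ M) :
    ‖x - y‖ ≤ 2 * M / α := by
  have hM : 0 ≤ M := (norm_nonneg g₁).trans h₁
  have hg : ‖g₁ - g₂‖ ≤ 2 * M := (norm_sub_le _ _).trans (by linarith)
  have h : α * ‖x - y‖ ^ 2 ≤ 2 * M * ‖x - y‖ :=
    hmono.trans ((real_inner_le_norm _ _).trans (mul_le_mul_of_nonneg_right hg (norm_nonneg _)))
  rw [le_div_iff₀ hα]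
  nlinarith [norm_nonneg (x - y)]

section Calculus

variable {E : Type*} [NormedAddCommGroup E] [NormedSpace ℝ E]

theorem ae_hasDerivAt_of_sub_eq_integral [CompleteSpace E] {x xd : ℝ → E} {a b : ℝ}
    (hint : IntegrableOn xd (Icc a b))
    (hx : ∀ s ∈ Icc a b, ∀ t ∈ Icc a b, x t - x s = ∫ u in s..t, xd u) :
    ∀ᵐ τ, τ ∈ Ioo a b → HasDerivAt x (xd τ) τ := by
  rcases lt_or_ge b a with hba | hab
  · exact Eventually.of_forall fun τ hτ => absurd (hτ.1.trans hτ.2) hba.not_gt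
  have ha : a ∈ Icc a b := left_mem_Icc.2 hab
  have hint' := (intervalIntegrable_iff_integrableOn_Icc_of_le hab).2 hint
  filter_upwards [hint'.ae_hasDerivAt_integral] with τ hτ hτab
  rw [uIcc_of_le hab] at hτ
  refine ((hτ (Ioo_subset_Icc_self hτab) a ha).const_add (x a)).congr_of_eventuallyEq ?_
  filter_upwards [Ioo_mem_nhds hτab.1 hτab.2] with t ht
  rw [← hx a ha t (Ioo_subset_Icc_self ht), add_sub_cancel]

theorem lipschitzOnWith_of_sub_eq_integral {x xd : ℝ → E} {a b : ℝ} {K : ℝ≥0}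
    (hx : ∀ s ∈ Icc a b, ∀ t ∈ Icc a b, x t - x s = ∫ u in s..t, xd u)
    (hbd : ∀ᵐ τ, τ ∈ Ioo a b → ‖xd τ‖ ≤ K) : LipschitzOnWith K x (Icc a b) := by
  refine LipschitzOnWith.of_dist_le_mul fun t ht s hs => ?_
  rw [dist_eq_norm, hx s hs t ht, Real.dist_eq]
  refine intervalIntegral.norm_integral_le_of_norm_le_const_ae ?_
  filter_upwards [hbd, Measure.ae_ne volume a, Measure.ae_ne volume b] with τ hτ hτa hτb hmem
  have hτ' : τ ∈ Icc a b := ordConnected_Icc.uIcc_subset hs ht (uIoc_subset_uIcc hmem)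
  exact hτ ⟨hτ'.1.lt_of_ne' hτa, hτ'.2.lt_of_ne hτb⟩

end Calculus

/-- `e^{-2βt} ‖u t‖²` is absolutely continuous with almost everywhere nonpositive derivative. -/
theorem norm_le_exp_mul_of_ae_inner_le {F : Type*} [NormedAddCommGroup F]
    [InnerProductSpace ℝ F] {u u' : ℝ → F} {a b β : ℝ} {K : ℝ≥0}
    (hu : LipschitzOnWith K u (Icc a b))
    (hderiv : ∀ᵐ t, t ∈ Ioo a b → HasDerivAt u (u' t) t ∧ ⟪u' t, u t⟫ ≤ β * ‖u t‖ ^ 2) :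
    ∀ t ∈ Icc a b, ‖u t‖ ≤ Real.exp (β * (t - a)) * ‖u a‖ := by
  intro t ht
  set φ : ℝ → ℝ := fun s => Real.exp (-(2 * β) * s) * ‖u s‖ ^ 2 with hφdef
  have hsub : uIcc a t ⊆ Icc a b := by
    rw [uIcc_of_le ht.1]; exact Icc_subset_Icc_right ht.2
  have hφ : AbsolutelyContinuousOnInterval φ a t := by
    have hexp : AbsolutelyContinuousOnInterval (fun s => Real.exp (-(2 * β) * s)) a t :=
      ContDiffOn.absolutelyContinuousOnInterval (by fun_prop)
    have hnorm : AbsolutelyContinuousOnInterval (fun s => ‖u s‖) a t :=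
      (lipschitzWith_one_norm.comp_lipschitzOnWith (hu.mono hsub)).absolutelyContinuousOnInterval
    simpa only [hφdef, sq] using hexp.fun_mul (hnorm.fun_mul hnorm)
  have hφ' : ∀ᵐ s ∂volume.restrict (Icc a t), deriv φ s ≤ 0 := by
    rw [ae_restrict_iff' measurableSet_Icc]
    filter_upwards [hderiv, Measure.ae_ne volume a, Measure.ae_ne volume t]
      with s hs hsa hst hmem
    obtain ⟨hd, hinner⟩ := hs ⟨hmem.1.lt_of_ne' hsa, (hmem.2.lt_of_ne hst).trans_le ht.2⟩
    have hφd : HasDerivAt φ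
        (Real.exp (-(2 * β) * s) * (2 * (⟪u' s, u s⟫ - β * ‖u s‖ ^ 2))) s := by
      refine (((hasDerivAt_id s).const_mul (-(2 * β))).exp.fun_mul hd.norm_sq).congr_deriv ?_
      rw [real_inner_comm, id]; ring
    rw [hφd.deriv]
    exact mul_nonpos_of_nonneg_of_nonpos (Real.exp_pos _).le (by linarith)
  have hmono : φ t ≤ φ a := by
    have := intervalIntegral.integral_mono_ae_restrict ht.1 hφ.intervalIntegrable_deriv
      intervalIntegrable_const hφ'
    rw [hφ.integral_deriv_eq_sub, intervalIntegral.integral_zero] at this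
    linarith
  have hsq : ‖u t‖ ^ 2 ≤ (Real.exp (β * (t - a)) * ‖u a‖) ^ 2 := by
    calc ‖u t‖ ^ 2 = Real.exp (2 * β * t) * φ t := by
          rw [hφdef, ← mul_assoc, ← Real.exp_add, show 2 * β * t + -(2 * β) * t = 0 by ring,
            Real.exp_zero, one_mul]
      _ ≤ Real.exp (2 * β * t) * φ a := by gcongr
      _ = (Real.exp (β * (t - a)) * ‖u a‖) ^ 2 := by
          rw [hφdef, mul_pow, sq (Real.exp _), ← Real.exp_add, ← mul_assoc, ← Real.exp_add]
          congr 2; ring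
  exact (pow_le_pow_iff_left₀ (norm_nonneg _) (by positivity) two_ne_zero).1 hsq

theorem exists_fixedPoint_of_lipschitzOnWith {X : Type*} [MetricSpace X] {s : Set X}
    {P : X → X} {k : ℝ≥0} (hk : k < 1) (hs : IsComplete s) (hne : s.Nonempty)
    (hP : MapsTo P s s) (hlip : LipschitzOnWith k P s) : ∃ x ∈ s, P x = x := by
  obtain ⟨x, hx⟩ := hne
  obtain ⟨y, hy, hfix, -⟩ :=
    ContractingWith.exists_fixedPoint' hs hP ⟨hk, hlip.mapsToRestrict hP⟩ hx (edist_ne_top _ _)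
  exact ⟨y, hy, hfix⟩

namespace IsSweepingSolutionOn

variable {n : ℕ} {C : ℝ → Set (EuclideanSpace ℝ (Fin n))}
  {f : ℝ → EuclideanSpace ℝ (Fin n) → EuclideanSpace ℝ (Fin n)}
  {x xd : ℝ → EuclideanSpace ℝ (Fin n)} {a b η L M : ℝ}

theorem ae_hasDerivAt (h : IsSweepingSolutionOn C f x xd (Icc a b)) :
    ∀ᵐ τ, τ ∈ Ioo a b → HasDerivAt x (xd τ) τ :=
  ae_hasDerivAt_of_sub_eq_integral (h.2.1.integrableOn_isCompact isCompact_Icc) h.2.2.1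

theorem ae_norm_deriv_add_le (hη : 0 < η) (hL : 0 ≤ L) (hprox : ∀ t, IsProxRegular η (C t))
    (hcl : ∀ t, IsClosed (C t)) (hinf : ∀ s t, ∀ z ∈ C s, infDist z (C t) ≤ L * |s - t|)
    (hfbd : ∀ t, ∀ z ∈ C t, ‖f t z‖ ≤ M) (h : IsSweepingSolutionOn C f x xd (Icc a b)) :
    ∀ᵐ τ, τ ∈ Ioo a b → ‖xd τ + f τ (x τ)‖ ≤ L + M := by
  filter_upwards [h.ae_hasDerivAt, h.2.2.2] with τ hderiv hnormal hτ
  have hτ' : τ ∈ Icc a b := Ioo_subset_Icc_self hτ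
  have happroach : ∀ᶠ s in 𝓝[<] τ, ∃ y ∈ C τ, ‖x s - y‖ ≤ L * (τ - s) := by
    filter_upwards [Ioo_mem_nhdsLT hτ.1] with s hs
    obtain ⟨y, hy, hdist⟩ := (hcl τ).exists_infDist_eq_dist ⟨x τ, h.1 τ hτ'⟩ (x s)
    refine ⟨y, hy, ?_⟩
    rw [← dist_eq_norm, ← hdist, ← abs_of_pos (sub_pos.2 hs.2), abs_sub_comm]
    exact hinf s τ (x s) (h.1 s ⟨hs.1.le, hs.2.le.trans hτ.2.le⟩)
  have key := (hprox τ).neg_inner_le_of_hasDerivWithinAt hη (h.1 τ hτ') (hnormal hτ')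
    (hderiv hτ).hasDerivWithinAt happroach
  refine norm_add_le_of_inner_add_le hL ?_ (hfbd τ _ (h.1 τ hτ'))
  rwa [show -xd τ - f τ (x τ) = -(xd τ + f τ (x τ)) by abel, inner_neg_left, neg_neg,
    norm_neg] at key

theorem lipschitzOnWith (hη : 0 < η) (hL : 0 ≤ L) (hprox : ∀ t, IsProxRegular η (C t))
    (hcl : ∀ t, IsClosed (C t)) (hinf : ∀ s t, ∀ z ∈ C s, infDist z (C t) ≤ L * |s - t|)
    (hfbd : ∀ t, ∀ z ∈ C t, ‖f t z‖ ≤ M) (h : IsSweepingSolutionOn C f x xd (Icc a b)) :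
    LipschitzOnWith (L + 2 * M).toNNReal x (Icc a b) := by
  refine lipschitzOnWith_of_sub_eq_integral h.2.2.1 ?_
  filter_upwards [h.ae_norm_deriv_add_le hη hL hprox hcl hinf hfbd] with τ hR hτ
  have hf := hfbd τ _ (h.1 τ (Ioo_subset_Icc_self hτ))
  calc ‖xd τ‖ ≤ ‖xd τ + f τ (x τ)‖ + ‖f τ (x τ)‖ := norm_le_add_norm_add _ _
    _ ≤ L + 2 * M := by linarith [hR hτ]
    _ ≤ (L + 2 * M).toNNReal := Real.le_coe_toNNReal _

theorem norm_sub_le_exp {x₂ xd₂ : ℝ → EuclideanSpace ℝ (Fin n)} {α : ℝ} (hη : 0 < η)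
    (hL : 0 ≤ L) (hprox : ∀ t, IsProxRegular η (C t)) (hcl : ∀ t, IsClosed (C t))
    (hinf : ∀ s t, ∀ z ∈ C s, infDist z (C t) ≤ L * |s - t|)
    (hfbd : ∀ t, ∀ z ∈ C t, ‖f t z‖ ≤ M)
    (hmono : ∀ t z₁ z₂, α * ‖z₁ - z₂‖ ^ 2 ≤ ⟪f t z₁ - f t z₂, z₁ - z₂⟫)
    (h₁ : IsSweepingSolutionOn C f x xd (Icc a b))
    (h₂ : IsSweepingSolutionOn C f x₂ xd₂ (Icc a b)) :
    ∀ t ∈ Icc a b, ‖x t - x₂ t‖ ≤ Real.exp (((L + M) / η - α) * (t - a)) * ‖x a - x₂ a‖ := by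
  refine norm_le_exp_mul_of_ae_inner_le (u' := fun t => xd t - xd₂ t)
    ((h₁.lipschitzOnWith hη hL hprox hcl hinf hfbd).sub
      (h₂.lipschitzOnWith hη hL hprox hcl hinf hfbd)) ?_
  filter_upwards [h₁.ae_hasDerivAt, h₂.ae_hasDerivAt, h₁.2.2.2, h₂.2.2.2,
    h₁.ae_norm_deriv_add_le hη hL hprox hcl hinf hfbd,
    h₂.ae_norm_deriv_add_le hη hL hprox hcl hinf hfbd] with τ hd₁ hd₂ hN₁ hN₂ hR₁ hR₂ hτ
  have hτ' : τ ∈ Icc a b := Ioo_subset_Icc_self hτ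
  exact ⟨(hd₁ hτ).sub (hd₂ hτ), (hprox τ).inner_sub_le hη (h₁.1 τ hτ') (h₂.1 τ hτ')
    (hN₁ hτ') (hN₂ hτ') (hR₁ hτ) (hR₂ hτ) (hmono τ _ _)⟩

end IsSweepingSolutionOn

theorem sweeping_process_poincare_map_contraction_general {n : ℕ}
    (C : ℝ → Set (EuclideanSpace ℝ (Fin n)))
    (f : ℝ → EuclideanSpace ℝ (Fin n) → EuclideanSpace ℝ (Fin n))
    (η L_C M_f α T : ℝ) (hη : 0 < η) (hL_C : 0 < L_C)
    (hα : 0 < α) (hT : 0 < T)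
    (hne : ∀ t, (C t).Nonempty) (hcl : ∀ t, IsClosed (C t))
    (hprox : ∀ t, IsProxRegular η (C t))
    (hCLip : ∀ t₁ t₂, hausdorffDist (C t₁) (C t₂) ≤ L_C * |t₁ - t₂|)
    (hfbd : ∀ t s x, x ∈ C s → ‖f t x‖ ≤ M_f)
    (hmono : ∀ t x₁ x₂, α * ‖x₁ - x₂‖ ^ 2 ≤ ⟪f t x₁ - f t x₂, x₁ - x₂⟫)
    (hαbig : (L_C + M_f) / η < α)
    (hCper : ∀ t, C (t + T) = C t)
    (X Xd : EuclideanSpace ℝ (Fin n) → ℝ → EuclideanSpace ℝ (Fin n))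
    (hX : ∀ a ∈ C 0, IsSweepingSolutionOn C f (X a) (Xd a) (Set.Icc 0 T) ∧ X a 0 = a) :
    (∀ a ∈ C 0, X a T ∈ C 0) ∧
    (∀ a ∈ C 0, ∀ c ∈ C 0,
      ‖X a T - X c T‖ ≤ Real.exp (((M_f + L_C - η * α) / η) * T) * ‖a - c‖) ∧
    Real.exp (((M_f + L_C - η * α) / η) * T) < 1 ∧
    ∃ a ∈ C 0, X a T = a := by
  obtain ⟨z₀, hz₀⟩ := hne 0
  -- `hausdorffDist` is `0` between sets at infinite Hausdorff edistance, so `hCLip` only bounds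
  -- `infDist` once the sets are known to be bounded; strong monotonicity of `f` provides this.
  have hbdd : ∀ t, Bornology.IsBounded (C t) := fun t =>
    isBounded_closedBall.subset fun z hz => by
      rw [mem_closedBall, dist_eq_norm]
      exact norm_sub_le_of_mul_norm_sq_le_inner hα (hmono 0 z z₀) (hfbd 0 t z hz)
        (hfbd 0 0 z₀ hz₀)
  have hinf : ∀ s t, ∀ z ∈ C s, infDist z (C t) ≤ L_C * |s - t| := fun s t z hz =>
    (infDist_le_hausdorffDist_of_mem hz (hausdorffEDist_ne_top_of_nonempty_of_bounded
      (hne s) (hne t) (hbdd s) (hbdd t))).trans (hCLip s t)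
  have hβ : (L_C + M_f) / η - α = (M_f + L_C - η * α) / η := by field_simp; ring
  have hTmem : T ∈ Icc 0 T := right_mem_Icc.2 hT.le
  have hmaps : MapsTo (X · T) (C 0) (C 0) := fun a ha => by
    simpa [← hCper 0] using (hX a ha).1.1 T hTmem
  have hcontr : ∀ a ∈ C 0, ∀ c ∈ C 0,
      ‖X a T - X c T‖ ≤ Real.exp (((M_f + L_C - η * α) / η) * T) * ‖a - c‖ := fun a ha c hc => by
    simpa only [(hX a ha).2, (hX c hc).2, sub_zero, hβ] using
      (hX a ha).1.norm_sub_le_exp hη hL_C.le hprox hcl hinf (fun t => hfbd t t) hmono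
        (hX c hc).1 T hTmem
  have hk : Real.exp (((M_f + L_C - η * α) / η) * T) < 1 :=
    Real.exp_lt_one_iff.2 (mul_neg_of_neg_of_pos (hβ ▸ sub_neg.2 hαbig) hT)
  refine ⟨hmaps, hcontr, hk, ?_⟩
  exact exists_fixedPoint_of_lipschitzOnWith (k := ⟨_, (Real.exp_pos _).le⟩) hk
    (hcl 0).isComplete ⟨z₀, hz₀⟩ hmaps <| LipschitzOnWith.of_dist_le_mul fun a ha c hc => by
      rw [dist_eq_norm, dist_eq_norm]; exact hcontr a ha c hc

/-- The Poincaré map of the T-periodic sweeping process maps C(0) into itself, is a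
contraction with constant e^{ᾱT} < 1, and therefore has a fixed point, yielding a
T-periodic solution. -/
theorem sweeping_process_poincare_map_contraction {n : ℕ}
    (C : ℝ → Set (EuclideanSpace ℝ (Fin n)))
    (f : ℝ → EuclideanSpace ℝ (Fin n) → EuclideanSpace ℝ (Fin n))
    (η L_C L_f M_f α T : ℝ) (hη : 0 < η) (hL_C : 0 < L_C) (hL_f : 0 < L_f)
    (hM_f : 0 ≤ M_f) (hα : 0 < α) (hT : 0 < T)
    (hne : ∀ t, (C t).Nonempty) (hcl : ∀ t, IsClosed (C t))
    (hprox : ∀ t, IsProxRegular η (C t))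
    (hCLip : ∀ t₁ t₂, hausdorffDist (C t₁) (C t₂) ≤ L_C * |t₁ - t₂|)
    (hfLip : ∀ t₁ t₂ x₁ x₂, ‖f t₁ x₁ - f t₂ x₂‖ ≤ L_f * |t₁ - t₂| + L_f * ‖x₁ - x₂‖)
    (hfbd : ∀ t s x, x ∈ C s → ‖f t x‖ ≤ M_f)
    (hmono : ∀ t x₁ x₂, α * ‖x₁ - x₂‖ ^ 2 ≤ ⟪f t x₁ - f t x₂, x₁ - x₂⟫)
    (hαbig : (L_C + M_f) / η < α)
    (hCper : ∀ t, C (t + T) = C t) (hfper : ∀ t x, f (t + T) x = f t x)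
    (X Xd : EuclideanSpace ℝ (Fin n) → ℝ → EuclideanSpace ℝ (Fin n))
    (hX : ∀ a ∈ C 0, IsSweepingSolutionOn C f (X a) (Xd a) (Set.Icc 0 T) ∧ X a 0 = a)
    (hXuniq : ∀ a ∈ C 0, ∀ y yd : ℝ → EuclideanSpace ℝ (Fin n),
      IsSweepingSolutionOn C f y yd (Set.Icc 0 T) → y 0 = a →
        ∀ t ∈ Set.Icc 0 T, y t = X a t)
    (hXcont : ∀ t ∈ Set.Icc 0 T, ContinuousOn (fun a => X a t) (C 0)) :
    (∀ a ∈ C 0, X a T ∈ C 0) ∧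
    (∀ a ∈ C 0, ∀ c ∈ C 0,
      ‖X a T - X c T‖ ≤ Real.exp (((M_f + L_C - η * α) / η) * T) * ‖a - c‖) ∧
    Real.exp (((M_f + L_C - η * α) / η) * T) < 1 ∧
    ∃ a ∈ C 0, X a T = a :=
  sweeping_process_poincare_map_contraction_general C f η L_C M_f α T hη hL_C hα hT hne hcl hprox
    hCLip hfbd hmono hαbig hCper X Xd hX
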